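/- Let (R, ⊕, ≤) be a lattice ordered monoid with ⊕ commutative, satisfying the weak Archimedean property: for all a, b ∈ R and all x ∈ R with x > 0, there exists n ∈ ℕ such that n·x ⊕ a ≰ b, where n·x denotes x ⊕ ⋯ ⊕ x (n times). Let D = (V, A) be a finite digraph with arc resources (x_a)_{a∈A} in R such that x_C > 0 for every cycle C of D, fix an origin o ∈ V, and let (b_v)_{v∈V} be any family of elements of R. Then for every x_M ∈ R, the set of paths P in D with origin o satisfying x_P ⊕ b_v ≤ x_M, where v is the destination of P, is finite. -/

import Mathlib

/-!
Every path from `o` is, up to the order of its arcs, a path with fewer than `|V|` arcs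
together with a family of cycles of length at most `|V|`, obtained by repeatedly cutting
out a cycle between two visits of the same vertex. The resources of the short paths
(shifted by `b`) are bounded below by some `a`, and there are finitely many short cycles,
each of positive resource. By the weak Archimedean property there is an `N` such that
`N • x_C + a ≰ x_M` for every short cycle `C`, so a path in the set uses each short cycle
fewer than `N` times, and its length is bounded.
-/

/-- A digraph with vertex set `V` and arc set `A`: each arc has a tail and a head. -/
structure Digraph' (V A : Type*) where
  tail : A → V
  head : A → V

/-- `D.IsPathFrom v w l` : the list of arcs `l` is a path from `v` to `w` in `D`:
the tail of each arc is the head of the previous one (or `v` for the first arc),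
and the head of the last arc is `w`; the empty list is the unique path from `v` to `v`. -/
def Digraph'.IsPathFrom {V A : Type*} (D : Digraph' V A) : V → V → List A → Prop
  | v, w, [] => v = w
  | v, w, a :: l => D.tail a = v ∧ D.IsPathFrom (D.head a) w l

/-- The resource of a path `P = (a₁, …, a_k)` is `x_{a₁} + ⋯ + x_{a_k}` (and `0` for
the empty path). -/
def pathRes {A R : Type*} [AddMonoid R] (x : A → R) (l : List A) : R := (l.map x).sum

def WeakArchimedean (R : Type*) [AddMonoid R] [Preorder R] : Prop :=
  ∀ a b x : R, 0 < x → ∃ n : ℕ, ¬ n • x + a ≤ b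

section OrderedMonoid

variable {R : Type*} [AddMonoid R] [Preorder R] [AddLeftMono R] [AddRightMono R]

theorem WeakArchimedean.exists_forall_nsmul_add_not_le (hR : WeakArchimedean R) {s : Set R}
    (hs : s.Finite) (hpos : ∀ r ∈ s, 0 < r) (a b : R) :
    ∃ N : ℕ, ∀ r ∈ s, ∀ n ≥ N, ¬ n • r + a ≤ b := by
  choose! m hm using fun r (hr : r ∈ s) => hR a b r (hpos r hr)
  obtain ⟨N, hN⟩ := (hs.image m).bddAbove
  refine ⟨N, fun r hr n hn hle => hm r hr ?_⟩
  calc m r • r + a ≤ n • r + a := by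
        gcongr
        · exact (hpos r hr).le
        · exact (hN ⟨r, hr, rfl⟩).trans hn
    _ ≤ b := hle

theorem List.count_nsmul_le_sum_map {ι : Type*} [BEq ι] [LawfulBEq ι] {f : ι → R}
    {l : List ι} (hf : ∀ i ∈ l, 0 ≤ f i) (i : ι) : l.count i • f i ≤ (l.map f).sum := by
  have hsub := (List.replicate_sublist_iff.2 le_rfl : (List.replicate (l.count i) i).Sublist l)
  simpa [List.map_replicate, List.sum_replicate] using
    (hsub.map f).sum_le_sum (by simpa using hf)

theorem List.count_lt_of_sum_map_add_le {ι : Type*} [BEq ι] [LawfulBEq ι] {f : ι → R}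
    {l : List ι} (hf : ∀ i ∈ l, 0 ≤ f i) {i : ι} {N : ℕ} {a b : R}
    (hN : ∀ n ≥ N, ¬ n • f i + a ≤ b) (h : (l.map f).sum + a ≤ b) : l.count i < N :=
  not_le.1 fun hNi => hN _ hNi ((add_le_add (count_nsmul_le_sum_map hf i) le_rfl).trans h)

end OrderedMonoid

theorem List.length_le_card_mul_of_count_le {α : Type*} [BEq α] [LawfulBEq α] {l : List α}
    {s : Finset α} (hs : ∀ a ∈ l, a ∈ s) {N : ℕ} (hN : ∀ a ∈ l, l.count a ≤ N) :
    l.length ≤ s.card * N := by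
  classical
  cases lawful_beq_subsingleton ‹BEq α› instBEqOfDecidableEq
  rw [← List.sum_toFinset_count_eq_length]
  calc ∑ a ∈ l.toFinset, l.count a ≤ l.toFinset.card • N :=
        Finset.sum_le_card_nsmul _ _ _ (by simpa using hN)
    _ ≤ s.card * N :=
        Nat.mul_le_mul_right N (Finset.card_le_card fun a ha => hs a (List.mem_toFinset.1 ha))

theorem List.Perm.length_le_of_append_flatten {α : Type*} {l l₀ : List α}
    {cs : List (List α)} (h : l.Perm (l₀ ++ cs.flatten)) {K : ℕ} (hl₀ : l₀.length ≤ K)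
    (hcs : ∀ c ∈ cs, c.length ≤ K) : l.length ≤ K + K * cs.length := by
  have hsum : (cs.map List.length).sum ≤ cs.length * K := by
    simpa using List.sum_le_card_nsmul (cs.map List.length) K (by simpa using hcs)
  rw [h.length_eq, List.length_append, List.length_flatten, mul_comm K]
  omega

section PathRes

variable {A R : Type*} [AddCommMonoid R] (x : A → R)

theorem pathRes_append (l₁ l₂ : List A) :
    pathRes x (l₁ ++ l₂) = pathRes x l₁ + pathRes x l₂ := by
  simp [pathRes]

theorem pathRes_flatten (cs : List (List A)) :
    pathRes x cs.flatten = (cs.map (pathRes x)).sum := by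
  simp only [pathRes, List.map_flatten, List.sum_flatten, List.map_map]
  rfl

theorem List.Perm.pathRes_eq {l₁ l₂ : List A} (h : l₁.Perm l₂) :
    pathRes x l₁ = pathRes x l₂ :=
  (h.map x).sum_eq

end PathRes

namespace Digraph'

variable {V A : Type*} (D : Digraph' V A)

def IsCycle (c : List A) : Prop :=
  c ≠ [] ∧ ∃ u, D.IsPathFrom u u c

def endpoint (u : V) (l : List A) : V :=
  l.foldl (fun _ a => D.head a) u

theorem endpoint_append (u : V) (l₁ l₂ : List A) :
    D.endpoint u (l₁ ++ l₂) = D.endpoint (D.endpoint u l₁) l₂ :=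
  List.foldl_append ..

theorem isPathFrom_append {u w : V} {l₁ l₂ : List A} :
    D.IsPathFrom u w (l₁ ++ l₂) ↔
      D.IsPathFrom u (D.endpoint u l₁) l₁ ∧ D.IsPathFrom (D.endpoint u l₁) w l₂ := by
  induction l₁ generalizing u with
  | nil => simp [IsPathFrom, endpoint]
  | cons a l ih =>
    simp only [List.cons_append, IsPathFrom, endpoint, List.foldl_cons, ih, and_assoc]

variable {D}

/-- Pigeonhole on the vertices reached after `0, 1, …, |V|` arcs. -/
theorem IsPathFrom.exists_cycle [Fintype V] {u w : V} {l : List A} (h : D.IsPathFrom u w l)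
    (hl : Fintype.card V ≤ l.length) :
    ∃ l₁ c l₂, l = l₁ ++ c ++ l₂ ∧ D.IsCycle c ∧ c.length ≤ Fintype.card V ∧
      D.IsPathFrom u w (l₁ ++ l₂) := by
  obtain ⟨i, j, hne, hij⟩ := Fintype.exists_ne_map_eq_of_card_lt
    (fun k : Fin (Fintype.card V + 1) => D.endpoint u (l.take k)) (by simp)
  wlog hlt : i < j generalizing i j
  · exact this j i hne.symm hij.symm (lt_of_le_of_ne (not_lt.1 hlt) hne.symm)
  have hj : (j : ℕ) ≤ l.length := by omega
  set c := (l.take j).drop i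
  have htake : l.take j = l.take i ++ c := by
    rw [← List.take_append_drop i (l.take j), List.take_take, min_eq_left (Fin.le_def.1 hlt.le)]
  have hsplit : l = l.take i ++ c ++ l.drop j := by rw [← htake, List.take_append_drop]
  have hclen : c.length = j - i := by simp [c]; omega
  set m := D.endpoint u (l.take i)
  have hcm : D.endpoint m c = m := by
    simp only [m, ← endpoint_append, ← htake]
    exact hij.symm
  rw [hsplit, List.append_assoc, isPathFrom_append, isPathFrom_append, hcm] at h
  refine ⟨l.take i, c, l.drop j, hsplit, ⟨?_, m, h.2.1⟩, by omega,
    D.isPathFrom_append.2 ⟨h.1, h.2.2⟩⟩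
  rw [← List.length_pos_iff]
  omega

theorem IsPathFrom.exists_perm_append_flatten [Fintype V] {u w : V} {l : List A}
    (h : D.IsPathFrom u w l) :
    ∃ (l₀ : List A) (cs : List (List A)), D.IsPathFrom u w l₀ ∧ l₀.length < Fintype.card V ∧
      (∀ c ∈ cs, D.IsCycle c ∧ c.length ≤ Fintype.card V) ∧ l.Perm (l₀ ++ cs.flatten) := by
  by_cases hl : l.length < Fintype.card V
  · exact ⟨l, [], h, hl, by simp, by simp⟩
  obtain ⟨l₁, c, l₂, hsplit, hc, hcK, h'⟩ := h.exists_cycle (not_lt.1 hl)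
  have hshorter : (l₁ ++ l₂).length < l.length := by
    have := List.length_pos_iff.2 hc.1
    simp only [hsplit, List.length_append]
    omega
  obtain ⟨l₀, cs, h₀, h₀K, hcs, hperm⟩ := h'.exists_perm_append_flatten
  refine ⟨l₀, c :: cs, h₀, h₀K, List.forall_mem_cons.2 ⟨⟨hc, hcK⟩, hcs⟩, ?_⟩
  classical
  rw [hsplit, List.perm_iff_count]
  intro a
  have := hperm.count_eq a
  simp only [List.count_append, List.flatten_cons] at this ⊢
  omega
termination_by l.length
decreasing_by simpa using hshorter

end Digraph'

theorem stmt9_general {V A R : Type*} [Fintype V] [Fintype A]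
    [Lattice R] [AddCommMonoid R]
    [CovariantClass R R (· + ·) (· ≤ ·)]
    (harch : ∀ a b xx : R, (0 ≤ xx ∧ xx ≠ 0) → ∃ n : ℕ, ¬ (n • xx + a ≤ b))
    (D : Digraph' V A) (x : A → R)
    (hcyc : ∀ (u : V) (C : List A), C ≠ [] → D.IsPathFrom u u C →
      0 ≤ pathRes x C ∧ pathRes x C ≠ 0)
    (o : V) (b : V → R) (xM : R) :
    {l : List A | ∃ v : V, D.IsPathFrom o v l ∧ pathRes x l + b v ≤ xM}.Finite := by
  classical
  set K := Fintype.card V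
  have hR : WeakArchimedean R := fun a b r hr => harch a b r ⟨hr.le, hr.ne'⟩
  have hpos : ∀ c, D.IsCycle c → 0 < pathRes x c := fun c ⟨hc, u, hu⟩ =>
    (hcyc u c hc hu).1.lt_of_ne' (hcyc u c hc hu).2
  have hS : {c : List A | D.IsCycle c ∧ c.length ≤ K}.Finite :=
    (List.finite_length_le A K).subset fun _ hc => hc.2
  obtain ⟨a, ha⟩ := (((List.finite_length_lt A K).prod (Set.finite_univ (α := V))).image
    fun p => pathRes x p.1 + b p.2).bddBelow
  obtain ⟨N, hN⟩ := hR.exists_forall_nsmul_add_not_le (hS.image (pathRes x))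
    (by rintro _ ⟨c, hc, rfl⟩; exact hpos c hc.1) a xM
  refine (List.finite_length_le A (K + K * (hS.toFinset.card * N))).subset ?_
  rintro l ⟨v, hl, hle⟩
  obtain ⟨l₀, cs, -, hl₀K, hcs, hperm⟩ := hl.exists_perm_append_flatten
  have hsum : (cs.map (pathRes x)).sum + a ≤ xM := calc
    _ ≤ (cs.map (pathRes x)).sum + (pathRes x l₀ + b v) := by
        gcongr
        exact ha ⟨(l₀, v), ⟨hl₀K, trivial⟩, rfl⟩
    _ = pathRes x l + b v := by
        rw [hperm.pathRes_eq, pathRes_append, pathRes_flatten]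
        abel
    _ ≤ xM := hle
  have hcount : ∀ c ∈ cs, cs.count c ≤ N := fun c hc =>
    (List.count_lt_of_sum_map_add_le (fun c hc => (hpos c (hcs c hc).1).le)
      (hN _ ⟨c, hcs c hc, rfl⟩) hsum).le
  calc l.length ≤ K + K * cs.length :=
        hperm.length_le_of_append_flatten hl₀K.le fun c hc => (hcs c hc).2
    _ ≤ K + K * (hS.toFinset.card * N) := by
        gcongr
        exact List.length_le_card_mul_of_count_le
          (fun c hc => hS.mem_toFinset.2 (hcs c hc)) hcount

/-- in a commutative lattice ordered monoid satisfying the weak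
Archimedean property, if `x_C > 0` for every cycle `C` of a finite digraph `D`, then
for every family `(b_v)` of resources and every `x_M`, the set of paths `P` with
origin `o` satisfying `x_P + b v ≤ x_M` (where `v` is the destination of `P`) is
finite. -/
theorem stmt9 {V A R : Type*} [Fintype V] [Fintype A]
    [Lattice R] [AddCommMonoid R]
    [CovariantClass R R (· + ·) (· ≤ ·)]
    [CovariantClass R R (Function.swap (· + ·)) (· ≤ ·)]
    (harch : ∀ a b xx : R, (0 ≤ xx ∧ xx ≠ 0) → ∃ n : ℕ, ¬ (n • xx + a ≤ b))
    (D : Digraph' V A) (x : A → R)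
    (hcyc : ∀ (u : V) (C : List A), C ≠ [] → D.IsPathFrom u u C →
      0 ≤ pathRes x C ∧ pathRes x C ≠ 0)
    (o : V) (b : V → R) (xM : R) :
    {l : List A | ∃ v : V, D.IsPathFrom o v l ∧ pathRes x l + b v ≤ xM}.Finite :=
  stmt9_general harch D x hcyc o b xM
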